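/- arXiv:2310.11558 — 6 statements merged into one kernel-verified Lean document; each statement's English description precedes it below -/
import Mathlib

section
/- The function λ ↦ (1-δ)(1+λ) + δ(1+1/λ) over λ ∈ (0,1] is minimized at λ = min(√(δ/(1-δ)), 1) when δ ∈ [0,1), and the minimum value equals 1 + 2√(δ(1-δ)) for δ ∈ [0,1/2] and equals 2 for δ ∈ (1/2,1]. -/
/-- The meta-algorithm's DRCR objective `λ ↦ (1-δ)(1+λ) + δ(1+1/λ)` on `(0,1]`
is minimized at `λ = min (√(δ/(1-δ))) 1` for `δ ∈ [0,1)`, with minimum value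
`1 + 2√(δ(1-δ))` for `δ ≤ 1/2` and `2` for `δ > 1/2`. -/
theorem stmt0 (δ : ℝ) (hδ0 : 0 ≤ δ) (hδ1 : δ < 1)
    (f : ℝ → ℝ) (hf : ∀ lam, f lam = (1 - δ) * (1 + lam) + δ * (1 + 1 / lam))
    (lamStar : ℝ) (hlam : lamStar = min (Real.sqrt (δ / (1 - δ))) 1) :
    (∀ lam, 0 < lam → lam ≤ 1 → f lamStar ≤ f lam) ∧
      f lamStar =
        (if δ ≤ 1 / 2 then 1 + 2 * Real.sqrt (δ * (1 - δ)) else 2) := by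
  have h1δ : 0 < 1 - δ := by linarith
  have key : ∀ lam : ℝ, 0 < lam →
      2 * Real.sqrt (δ * (1 - δ)) ≤ (1 - δ) * lam + δ / lam := by
    intro lam hl
    have h1 : Real.sqrt (δ * (1 - δ)) =
        Real.sqrt ((1 - δ) * lam) * Real.sqrt (δ / lam) := by
      rw [← Real.sqrt_mul (by positivity)]
      congr 1
      field_simp
    have h2 := Real.sq_sqrt (show (0:ℝ) ≤ (1 - δ) * lam by positivity)
    have h3 := Real.sq_sqrt (show (0:ℝ) ≤ δ / lam by positivity)
    nlinarith [sq_nonneg (Real.sqrt ((1 - δ) * lam) - Real.sqrt (δ / lam))]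
  have hrw : ∀ lam : ℝ, 0 < lam →
      f lam = 1 + ((1 - δ) * lam + δ / lam) := by
    intro lam hl
    rw [hf]
    field_simp
    ring
  by_cases hhalf : δ ≤ 1 / 2
  · have hsle : Real.sqrt (δ / (1 - δ)) ≤ 1 := by
      have h : δ / (1 - δ) ≤ 1 := by rw [div_le_one h1δ]; linarith
      simpa using Real.sqrt_le_sqrt h
    have hlamStar : lamStar = Real.sqrt (δ / (1 - δ)) := by
      rw [hlam, min_eq_left hsle]
    have hval : f lamStar = 1 + 2 * Real.sqrt (δ * (1 - δ)) := by
      by_cases hδ : δ = 0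
      · subst hδ; simp [hlamStar, hf]
      · have hδpos : 0 < δ := lt_of_le_of_ne hδ0 (Ne.symm hδ)
        have hspos : 0 < Real.sqrt (δ / (1 - δ)) := Real.sqrt_pos.2 (by positivity)
        have hs2 : Real.sqrt (δ / (1 - δ)) ^ 2 = δ / (1 - δ) :=
          Real.sq_sqrt (by positivity)
        have hprod : Real.sqrt (δ * (1 - δ)) = (1 - δ) * Real.sqrt (δ / (1 - δ)) := by
          rw [show δ * (1 - δ) = (1 - δ) ^ 2 * (δ / (1 - δ)) by field_simp,
              Real.sqrt_mul (by positivity), Real.sqrt_sq h1δ.le]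
        have hds : δ / Real.sqrt (δ / (1 - δ)) = (1 - δ) * Real.sqrt (δ / (1 - δ)) := by
          rw [div_eq_iff hspos.ne']
          have hs2' : Real.sqrt (δ / (1 - δ)) ^ 2 * (1 - δ) = δ := by
            rw [hs2]; field_simp
          nlinarith [hs2']
        rw [hrw _ (hlamStar ▸ hspos), hlamStar, hprod, hds]
        ring
    refine ⟨fun lam hl _ => ?_, by rw [hval, if_pos hhalf]⟩
    rw [hval, hrw lam hl]
    linarith [key lam hl]
  · push_neg at hhalf
    have hsge : 1 ≤ Real.sqrt (δ / (1 - δ)) := by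
      have h : (1:ℝ) ≤ δ / (1 - δ) := by rw [le_div_iff₀ h1δ]; linarith
      simpa using Real.sqrt_le_sqrt h
    have hlamStar : lamStar = 1 := by rw [hlam, min_eq_right hsge]
    have hval : f lamStar = 2 := by rw [hlamStar, hf]; norm_num; linarith
    refine ⟨fun lam hl hl1 => ?_, by rw [hval, if_neg (not_le.2 hhalf)]⟩
    rw [hval, hrw lam hl]
    have hnum : 0 ≤ (lam - 1) * (lam * (1 - δ) - δ) := by
      have h1 : 0 ≤ 1 - lam := by linarith
      have h2 : 0 ≤ δ - lam * (1 - δ) := by nlinarith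
      nlinarith [mul_nonneg h1 h2]
    have heq : (1 - δ) * lam + δ / lam - 1 =
        (lam - 1) * (lam * (1 - δ) - δ) / lam := by
      field_simp
      ring
    have := div_nonneg hnum hl.le
    linarith [heq ▸ this]
end

section
/- For B > 0 and δ ∈ [0,1], the function Y ↦ (1-δ)·(Y+B)/B + δ·(Y+B)/Y on (0,B] is minimized at Y = B·min(√(δ/(1-δ)),1), with minimum value χ(δ), where χ(δ) = 1 + 2√(δ(1-δ)) for δ ≤ 1/2 and χ(δ) = 2 for δ > 1/2. -/
/-- For `δ ∈ [0,1]`, the DRCR objective `Y ↦ (1-δ)(Y+B)/B + δ(Y+B)/Y` on `(0,B]`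
is minimized at `Y = B·min(√(δ/(1-δ)), 1)` (written piecewise, since
`min(√(δ/(1-δ)),1) = √(δ/(1-δ))` iff `δ ≤ 1/2`), with minimum value `χ(δ)`. -/
theorem stmt4 (B δ : ℝ) (hB : 0 < B) (hδ0 : 0 ≤ δ) (hδ1 : δ ≤ 1)
    (g : ℝ → ℝ) (hg : ∀ Y, g Y = (1 - δ) * (Y + B) / B + δ * (Y + B) / Y)
    (Ystar : ℝ)
    (hY : Ystar = B * (if δ ≤ 1 / 2 then Real.sqrt (δ / (1 - δ)) else 1)) :
    (∀ Y, 0 < Y → Y ≤ B → g Ystar ≤ g Y) ∧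
      g Ystar = (if δ ≤ 1 / 2 then 1 + 2 * Real.sqrt (δ * (1 - δ)) else 2) := by
  by_cases h : δ ≤ 1 / 2
  · simp only [if_pos h] at hY ⊢
    rcases eq_or_lt_of_le hδ0 with h0 | h0
    · -- δ = 0
      have hd : δ = 0 := h0.symm
      subst hd
      have hY0 : Ystar = 0 := by simp [hY]
      have hval : g Ystar = 1 + 2 * Real.sqrt (0 * (1 - 0)) := by
        rw [hY0, hg]
        simp [div_self hB.ne']
      refine ⟨fun Y hYpos hYB => ?_, hval⟩
      rw [hval, hg]
      simp only [zero_mul, zero_div, sub_zero, one_mul, add_zero]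
      rw [Real.sqrt_zero]
      rw [le_div_iff₀ hB]
      nlinarith
    · -- 0 < δ ≤ 1/2
      have hd1 : δ < 1 := lt_of_le_of_lt h (by norm_num)
      have h1d : (0:ℝ) < 1 - δ := by linarith
      set s := Real.sqrt (δ / (1 - δ)) with hsdef
      have hs2 : s ^ 2 = δ / (1 - δ) := Real.sq_sqrt (by positivity)
      have hspos : 0 < s := Real.sqrt_pos.2 (by positivity)
      set r := Real.sqrt (δ * (1 - δ)) with hrdef
      have hr2 : r ^ 2 = δ * (1 - δ) := Real.sq_sqrt (by positivity)
      have hr0 : 0 ≤ r := Real.sqrt_nonneg _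
      have hrs : r = (1 - δ) * s := by
        have hsq : ((1 - δ) * s) ^ 2 = r ^ 2 := by
          rw [hr2]; rw [mul_pow, hs2]; field_simp
        have he : δ * (1 - δ) = ((1 - δ) * s) ^ 2 := by rw [hsq, hr2]
        rw [hrdef, he, Real.sqrt_sq (mul_pos h1d hspos).le]
      have hds : δ = r * s := by
        rw [hrs]
        have : (1 - δ) * s * s = (1 - δ) * s ^ 2 := by ring
        rw [this, hs2]; field_simp
      have hYpos' : 0 < Ystar := by rw [hY]; positivity
      have hval : g Ystar = 1 + 2 * r := by
        rw [hg, hY]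
        field_simp
        linear_combination s * hrs.symm + hds
      refine ⟨fun Y hYpos hYB => ?_, hval⟩
      rw [hval, hg]
      rw [div_add_div _ _ hB.ne' hYpos.ne', le_div_iff₀ (by positivity)]
      have key : 0 ≤ (1 - δ) * ((1 - δ) * Y ^ 2 - 2 * r * B * Y + δ * B ^ 2) := by
        nlinarith [sq_nonneg ((1 - δ) * Y - r * B), hr2]
      have key2 : 0 ≤ (1 - δ) * Y ^ 2 - 2 * r * B * Y + δ * B ^ 2 :=
        nonneg_of_mul_nonneg_right key h1d
      nlinarith [key2]
  · -- δ > 1/2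
    simp only [if_neg h] at hY ⊢
    have hY0 : Ystar = B := by rw [hY, mul_one]
    have hval : g Ystar = 2 := by
      rw [hY0, hg]
      field_simp
      ring
    refine ⟨fun Y hYpos hYB => ?_, hval⟩
    rw [hval, hg]
    rw [div_add_div _ _ hB.ne' hYpos.ne', le_div_iff₀ (by positivity)]
    push_neg at h
    nlinarith [mul_nonneg (sub_nonneg.2 hYB) (show 0 ≤ δ * B - (1 - δ) * Y by nlinarith)]
end

section
/- For ℓ > 0, B > 0, and δ ∈ [0, ℓ/(ℓ+B)), the function Y ↦ (1-δ)·(Y+B)/ℓ + δ·(Y+B)/Y on (0,ℓ] is minimized at Y = ℓ·min(√(Bδ/(ℓ(1-δ))), 1) and the minimum value is δ + (1-δ)B/ℓ + 2√(δ(1-δ)B/ℓ) when Bδ/(ℓ(1-δ)) ≤ 1. -/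
/-- For `δ ∈ [0, ℓ/(ℓ+B))` with `Bδ/(ℓ(1-δ)) ≤ 1`, the DRCR objective
`Y ↦ (1-δ)(Y+B)/ℓ + δ(Y+B)/Y` on `(0,ℓ]` is minimized at
`Y = ℓ·min(√(Bδ/(ℓ(1-δ))), 1)`, with minimum value
`δ + (1-δ)B/ℓ + 2√(δ(1-δ)B/ℓ)`. -/
theorem stmt6 (ℓ B δ : ℝ) (hℓ : 0 < ℓ) (hB : 0 < B)
    (hδ0 : 0 ≤ δ) (hδ1 : δ < ℓ / (ℓ + B))
    (hratio : B * δ / (ℓ * (1 - δ)) ≤ 1)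
    (g : ℝ → ℝ) (hg : ∀ Y, g Y = (1 - δ) * (Y + B) / ℓ + δ * (Y + B) / Y)
    (Ystar : ℝ)
    (hY : Ystar = ℓ * min (Real.sqrt (B * δ / (ℓ * (1 - δ)))) 1) :
    (∀ Y, 0 < Y → Y ≤ ℓ → g Ystar ≤ g Y) ∧
      g Ystar = δ + (1 - δ) * B / ℓ + 2 * Real.sqrt (δ * (1 - δ) * B / ℓ) := by
  have hℓB : (0:ℝ) < ℓ + B := by linarith
  have hδlt1 : δ < 1 := lt_of_lt_of_le hδ1 (by rw [div_le_one hℓB]; linarith)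
  have h1δ : 0 < 1 - δ := by linarith
  rcases eq_or_lt_of_le hδ0 with h0 | h0
  · -- δ = 0
    have hδ : δ = 0 := h0.symm
    subst hδ
    have hYs : Ystar = 0 := by
      rw [hY]
      norm_num
    have hgY : g Ystar = B / ℓ := by
      rw [hg, hYs]
      norm_num
    constructor
    · intro Y hY0 hYℓ
      rw [hgY, hg]
      have : (0:ℝ) * (Y + B) / Y = 0 := by
        rw [zero_mul, zero_div]
      rw [this]
      norm_num
      gcongr
      linarith
    · rw [hgY]
      norm_num
  · -- δ > 0
    set r := B * δ / (ℓ * (1 - δ)) with hr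
    have hrpos : 0 < r := by positivity
    have hmin : min (Real.sqrt r) 1 = Real.sqrt r := by
      apply min_eq_left
      rw [show (1:ℝ) = Real.sqrt 1 by simp]
      exact Real.sqrt_le_sqrt hratio
    have hYpos : 0 < Ystar := by
      rw [hY, hmin]
      positivity
    have hYsq : Ystar ^ 2 = ℓ * B * δ / (1 - δ) := by
      rw [hY, hmin, mul_pow, Real.sq_sqrt hrpos.le, hr]
      field_simp
    set s := Real.sqrt (δ * (1 - δ) * B / ℓ) with hs
    have hs0 : 0 ≤ s := Real.sqrt_nonneg _
    have hs2 : s ^ 2 = δ * (1 - δ) * B / ℓ := Real.sq_sqrt (by positivity)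
    have hYsq' : (1 - δ) * Ystar ^ 2 = ℓ * B * δ := by
      rw [hYsq]; field_simp
    have hsY : s * Ystar = δ * B := by
      have h1 : (s * Ystar) ^ 2 = (δ * B) ^ 2 := by
        rw [mul_pow, hs2, hYsq]
        field_simp
      have h2 : 0 ≤ s * Ystar := by positivity
      have h3 : 0 ≤ δ * B := by positivity
      calc s * Ystar = Real.sqrt ((s * Ystar) ^ 2) := (Real.sqrt_sq h2).symm
        _ = Real.sqrt ((δ * B) ^ 2) := by rw [h1]
        _ = δ * B := Real.sqrt_sq h3
    constructor
    · intro Y hY0 hYℓ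
      rw [hg, hg]
      rw [div_add_div _ _ (ne_of_gt hℓ) (ne_of_gt hYpos),
          div_add_div _ _ (ne_of_gt hℓ) (ne_of_gt hY0)]
      rw [div_le_div_iff₀ (by positivity) (by positivity)]
      have e1 : (1 - δ) * Ystar ^ 2 * Y = ℓ * B * δ * Y := by rw [hYsq']
      have e2 : (1 - δ) * Ystar ^ 2 * Ystar = ℓ * B * δ * Ystar := by rw [hYsq']
      nlinarith [e1, e2, mul_nonneg (mul_nonneg (mul_nonneg h1δ.le hℓ.le)
        hYpos.le) (sq_nonneg (Y - Ystar))]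
    · rw [hg]
      rw [div_add_div _ _ (ne_of_gt hℓ) (ne_of_gt hYpos)]
      rw [div_eq_iff (by positivity)]
      field_simp
      linear_combination hYsq' - 2 * ℓ * hsY
end

section
/- Let B ≥ 1 be an integer, y a probability distribution on ℤ⁺, and k ∈ ℤ⁺. Define the mass-shifted distribution ŷ by ŷ(k) = y(k) + y(k+1), ŷ(k+1) = 0, and ŷ(t) = y(t) otherwise. Then for the expected cost L(y,N) = ∑_{t=1}^{N} (B+t−1)·y(t) + N·∑_{t=N+1}^{∞} y(t): (i) L(ŷ,N) = L(y,N) for all N ≤ k−1, and (ii) L(ŷ,N) ≤ L(y,N) − y(k+1) for all N ≥ k+1. -/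
/-- Mass-shifting lemma for the ski rental LP: moving the probability mass of
day `k+1` onto day `k` leaves the expected cost `L(y,N)` unchanged for
`N ≤ k-1` and decreases it by (at least) `y(k+1)` for `N ≥ k+1`. -/
theorem stmt8 (B : ℕ) (hB : 1 ≤ B) (y : ℕ → ℝ)
    (hy0 : y 0 = 0) (hynn : ∀ t, 0 ≤ y t) (hsum : HasSum y 1)
    (k : ℕ) (hk : 1 ≤ k)
    (yhat : ℕ → ℝ)
    (hyhat : ∀ t, yhat t =
      if t = k then y k + y (k + 1) else if t = k + 1 then 0 else y t)
    (L : (ℕ → ℝ) → ℕ → ℝ)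
    (hL : ∀ z : ℕ → ℝ, ∀ N, L z N = ∑ t ∈ Finset.Icc 1 N, ((B : ℝ) + t - 1) * z t
        + N * ∑' t : ℕ, (if N < t then z t else 0)) :
    (∀ N : ℕ, 1 ≤ N → N ≤ k - 1 → L yhat N = L y N) ∧
      (∀ N : ℕ, k + 1 ≤ N → L yhat N ≤ L y N - y (k + 1)) := by
  set c := y (k + 1) with hc
  have hys : Summable y := hsum.summable
  have hind : ∀ N : ℕ, Summable (fun t => if N < t then y t else 0) := by
    intro N
    refine Summable.of_nonneg_of_le (fun t => ?_) (fun t => ?_) hys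
    · split
      · exact hynn t
      · exact le_rfl
    · split
      · exact le_rfl
      · exact hynn t
  have htail : ∀ N : ℕ, N ≠ k →
      (∑' t : ℕ, (if N < t then yhat t else 0)) = ∑' t : ℕ, (if N < t then y t else 0) := by
    intro N hNk
    rcases lt_or_gt_of_ne hNk with hlt | hgt
    · have hd : HasSum (fun t : ℕ =>
          (if t = k then c else 0) + (if t = k + 1 then -c else 0)) 0 := by
        simpa using (hasSum_ite_eq k c).add (hasSum_ite_eq (k + 1) (-c))
      have heq : (fun t : ℕ => if N < t then yhat t else 0) =
          fun t => (if N < t then y t else 0)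
            + ((if t = k then c else 0) + (if t = k + 1 then -c else 0)) := by
        funext t
        rw [hyhat t]
        rcases eq_or_ne t k with rfl | h1
        · simp [hlt]
        · rcases eq_or_ne t (k + 1) with rfl | h2
          · have hN1 : N < k + 1 := Nat.lt_succ_of_lt hlt
            simp [h1, hN1, hc]
          · simp [h1, h2]
      rw [heq, ((hind N).hasSum.add hd).tsum_eq, add_zero]
    · apply tsum_congr
      intro t
      rcases lt_or_ge N t with h | h
      · have h1 : t ≠ k := by omega
        have h2 : t ≠ k + 1 := by omega
        simp [h, hyhat t, h1, h2]
      · simp [not_lt.mpr h]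
  constructor
  · intro N hN1 hNk
    rw [hL, hL, htail N (by omega)]
    congr 1
    apply Finset.sum_congr rfl
    intro t ht
    have ht' := Finset.mem_Icc.mp ht
    have h1 : t ≠ k := by omega
    have h2 : t ≠ k + 1 := by omega
    rw [hyhat t]; simp [h1, h2]
  · intro N hN
    rw [hL, hL, htail N (by omega)]
    have hfront : ∑ t ∈ Finset.Icc 1 N, ((B : ℝ) + t - 1) * yhat t
        = ∑ t ∈ Finset.Icc 1 N, ((B : ℝ) + t - 1) * y t - c := by
      have heq : ∀ t ∈ Finset.Icc 1 N, ((B : ℝ) + t - 1) * yhat t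
          = ((B : ℝ) + t - 1) * y t
            + ((if t = k then ((B : ℝ) + k - 1) * c else 0)
              + (if t = k + 1 then -(((B : ℝ) + (k + 1) - 1) * c) else 0)) := by
        intro t ht
        rw [hyhat t]
        rcases eq_or_ne t k with rfl | h1
        · simp; ring
        · rcases eq_or_ne t (k + 1) with rfl | h2
          · simp [h1, hc]
          · simp [h1, h2]
      rw [Finset.sum_congr rfl heq, Finset.sum_add_distrib, Finset.sum_add_distrib,
        Finset.sum_ite_eq' (Finset.Icc 1 N) k, Finset.sum_ite_eq' (Finset.Icc 1 N) (k + 1)]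
      have hkmem : k ∈ Finset.Icc 1 N := Finset.mem_Icc.mpr ⟨hk, by omega⟩
      have hk1mem : k + 1 ∈ Finset.Icc 1 N := Finset.mem_Icc.mpr ⟨by omega, hN⟩
      rw [if_pos hkmem, if_pos hk1mem]
      push_cast
      ring
    rw [hfront]
    apply le_of_eq
    ring
end

section
/- Let 0 < m ≤ M, δ ∈ [0,1], and m ≤ ℓ ≤ u ≤ M. Suppose (η, γ, q) with 1 ≤ η ≤ γ and q nonnegative with ∫_m^M q ≤ 1 satisfies V ≤ η·A(V) for all V ∈ [ℓ,u] and V ≤ γ·A(V) for all V ∈ [m,ℓ) ∪ (u,M], where A(V) = ∫_m^V v·q(v)dv + (1 − ∫_m^V q(v)dv)·m. Then for any finite strictly increasing price sequence m ≤ v₁ < v₂ < ... < v_N ≤ M, the profit P = ∑_{n=1}^{N} vₙ·∫_{v_{n−1}}^{vₙ} q(v)dv + (1 − ∫_m^{v_N} q(v)dv)·m (with v₀ = m) satisfies P ≥ A(v_N), and hence P ≥ v_N/η if v_N ∈ [ℓ,u] and P ≥ v_N/γ otherwise. -/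
open intervalIntegral MeasureTheory

/-- Key step for the DRCR guarantee of the protection-function-based algorithm
for online search: on any instance with strictly increasing prices
`m ≤ v₁ < ⋯ < v_N ≤ M` (with `v₀ = m`), the algorithm's profit `P` is at
least its profit `A(v_N)` on the corresponding hard instance, hence at least
`v_N/η` if `v_N ∈ [ℓ,u]` and at least `v_N/γ` otherwise. -/
theorem stmt11 (m M δ ℓ u η γ : ℝ)
    (hm : 0 < m) (hmM : m ≤ M) (hδ0 : 0 ≤ δ) (hδ1 : δ ≤ 1)
    (hmℓ : m ≤ ℓ) (hℓu : ℓ ≤ u) (huM : u ≤ M)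
    (hη : 1 ≤ η) (hηγ : η ≤ γ)
    (q : ℝ → ℝ) (hq : ∀ v ∈ Set.Icc m M, 0 ≤ q v)
    (hqi : IntervalIntegrable q volume m M)
    (hq1 : ∫ v in m..M, q v ≤ 1)
    (A : ℝ → ℝ)
    (hA : ∀ V, A V = (∫ v in m..V, v * q v) + (1 - ∫ v in m..V, q v) * m)
    (hcons : ∀ V ∈ Set.Icc ℓ u, V ≤ η * A V)
    (hrob : ∀ V ∈ Set.Icc m M, V < ℓ ∨ u < V → V ≤ γ * A V)
    (N : ℕ) (hN : 1 ≤ N) (v : ℕ → ℝ)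
    (hv0 : v 0 = m) (hv1 : m ≤ v 1)
    (hmono : ∀ n, 1 ≤ n → n < N → v n < v (n + 1))
    (hvN : v N ≤ M)
    (P : ℝ)
    (hP : P = (∑ n ∈ Finset.Icc 1 N, v n * ∫ w in (v (n - 1))..(v n), q w)
        + (1 - ∫ w in m..(v N), q w) * m) :
    A (v N) ≤ P ∧
      (v N ∈ Set.Icc ℓ u → v N / η ≤ P) ∧
      (v N ∉ Set.Icc ℓ u → v N / γ ≤ P) := by

  -- basic monotonicity of v on [0, N]
  have hstep : ∀ n, n < N → v n ≤ v (n + 1) := by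
    intro n hn
    rcases Nat.eq_zero_or_pos n with h0 | h1
    · subst h0; rw [hv0]; exact hv1
    · exact (hmono n h1 hn).le
  have vmono : ∀ i j, i ≤ j → j ≤ N → v i ≤ v j := by
    intro i j hij hjN
    induction j with
    | zero => simp_all
    | succ k ih =>
      rcases Nat.eq_or_lt_of_le hij with h | h
      · rw [h]
      · exact (ih (Nat.lt_succ_iff.mp h) (le_trans (Nat.le_succ k) hjN)).trans
          (hstep k (Nat.lt_of_succ_le hjN))
  have hvm : ∀ i, i ≤ N → m ≤ v i := by
    intro i hi
    rcases Nat.eq_zero_or_pos i with h0 | h1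
    · subst h0; rw [hv0]
    · exact hv1.trans (vmono 1 i h1 hi)
  have hvM : ∀ i, i ≤ N → v i ≤ M := fun i hi => (vmono i N hi le_rfl).trans hvN
  have hsub : ∀ i, i < N → Set.uIcc (v i) (v (i+1)) ⊆ Set.uIcc m M := by
    intro i hi
    apply Set.uIcc_subset_uIcc
    · rw [Set.mem_uIcc]; exact Or.inl ⟨hvm i hi.le, hvM i hi.le⟩
    · rw [Set.mem_uIcc]; exact Or.inl ⟨hvm (i+1) hi, hvM (i+1) hi⟩
  have hwqi : IntervalIntegrable (fun w => w * q w) volume m M :=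
    hqi.continuousOn_mul continuousOn_id
  have hqi' : ∀ i, i < N → IntervalIntegrable q volume (v i) (v (i+1)) :=
    fun i hi => hqi.mono_set (hsub i hi)
  have hwqi' : ∀ i, i < N → IntervalIntegrable (fun w => w * q w) volume (v i) (v (i+1)) :=
    fun i hi => hwqi.mono_set (hsub i hi)
  -- split the integral
  have hsplit : ∫ w in m..(v N), w * q w
      = ∑ i ∈ Finset.range N, ∫ w in (v i)..(v (i+1)), w * q w := by
    rw [← hv0]
    exact (intervalIntegral.sum_integral_adjacent_intervals
      (fun k hk => hwqi' k hk)).symm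
  -- per-interval bound
  have hterm : ∀ i, i < N →
      (∫ w in (v i)..(v (i+1)), w * q w) ≤ v (i+1) * ∫ w in (v i)..(v (i+1)), q w := by
    intro i hi
    rw [← intervalIntegral.integral_const_mul]
    apply intervalIntegral.integral_mono_on (hstep i hi) (hwqi' i hi)
      ((hqi' i hi).const_mul _)
    intro x hx
    have hxm : m ≤ x := (hvm i hi.le).trans hx.1
    have hxM : x ≤ M := hx.2.trans (hvM (i+1) hi)
    exact mul_le_mul_of_nonneg_right hx.2 (hq x ⟨hxm, hxM⟩)
  -- reindex the sum in P
  have hsum : (∑ n ∈ Finset.Icc 1 N, v n * ∫ w in (v (n - 1))..(v n), q w)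
      = ∑ i ∈ Finset.range N, v (i+1) * ∫ w in (v i)..(v (i+1)), q w := by
    rw [show Finset.Icc 1 N = Finset.Ico 1 (N+1) by rw [Finset.Ico_add_one_right_eq_Icc],
      Finset.sum_Ico_eq_sum_range]
    simp [Nat.add_comm 1]
  have key : A (v N) ≤ P := by
    rw [hA, hP, hsum]
    have : (∫ w in m..(v N), w * q w)
        ≤ ∑ i ∈ Finset.range N, v (i+1) * ∫ w in (v i)..(v (i+1)), q w := by
      rw [hsplit]
      exact Finset.sum_le_sum fun i hi => hterm i (Finset.mem_range.mp hi)
    linarith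
  have hη0 : (0:ℝ) < η := lt_of_lt_of_le one_pos hη
  have hγ0 : (0:ℝ) < γ := lt_of_lt_of_le one_pos (hη.trans hηγ)
  have hvNm : m ≤ v N := hvm N le_rfl
  refine ⟨key, ?_, ?_⟩
  · intro hmem
    rw [div_le_iff₀ hη0]
    calc v N ≤ η * A (v N) := hcons _ hmem
    _ ≤ η * P := by nlinarith
    _ = P * η := mul_comm _ _
  · intro hmem
    rw [Set.mem_Icc, not_and_or, not_le, not_le] at hmem
    rw [div_le_iff₀ hγ0]
    calc v N ≤ γ * A (v N) := hrob _ ⟨hvNm, hvN⟩ (hmem.imp id id)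
    _ ≤ γ * P := by nlinarith
    _ = P * γ := mul_comm _ _
end

section
/- Let 0 < m ≤ ℓ ≤ M and λ > 0 with ℓ − λ ≥ m. Let q : [m,M] → [0,1] be measurable with 0 ≤ q ≤ 1 and define G(c) = ∫_m^c v·q(v) dv + (1 − ∫_m^c q(v) dv)·m. Then |ℓ/G(ℓ) − ℓ̃/G(ℓ̃)| ≤ λ·(M²/m² + 1/m), where ℓ̃ = ℓ − λ. -/
open intervalIntegral MeasureTheory

/-- Any measurable function bounded on `[m,M]` is interval integrable between
points of `[m,M]`. -/
lemma stmt18_aux_integrable (m M a b : ℝ) (ha : a ∈ Set.Icc m M)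
    (hb : b ∈ Set.Icc m M) (g : ℝ → ℝ) (hg : Measurable g) (C : ℝ)
    (hC : ∀ x ∈ Set.Icc m M, ‖g x‖ ≤ C) :
    IntervalIntegrable g MeasureTheory.volume a b := by
  rw [intervalIntegrable_iff]
  have hsub : Set.uIoc a b ⊆ Set.Icc m M := by
    intro x hx
    rcases hx with ⟨h1, h2⟩
    constructor
    · exact le_trans (le_min ha.1 hb.1) h1.le
    · exact le_trans h2 (max_le ha.2 hb.2)
  apply MeasureTheory.Measure.integrableOn_of_bounded (M := C)
  · exact (measure_Ioc_lt_top).ne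
  · exact hg.aestronglyMeasurable
  · filter_upwards [MeasureTheory.ae_restrict_mem measurableSet_uIoc] with x hx
    exact hC x (hsub hx)

/-- Rounding-error bound for the online search DRCR constraints: rounding the
interval endpoint `ℓ` down by `λ` changes the constraint ratio `ℓ/G(ℓ)` by at
most `λ·(M²/m² + 1/m)`. -/
theorem stmt18 (m M ℓ lam : ℝ) (hm : 0 < m) (hmℓ : m ≤ ℓ) (hℓM : ℓ ≤ M)
    (hlam : 0 < lam) (hlo : m ≤ ℓ - lam)
    (q : ℝ → ℝ) (hqm : Measurable q)
    (hq01 : ∀ v ∈ Set.Icc m M, q v ∈ Set.Icc (0 : ℝ) 1)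
    (G : ℝ → ℝ)
    (hG : ∀ c, G c = (∫ v in m..c, v * q v) + (1 - ∫ v in m..c, q v) * m) :
    |ℓ / G ℓ - (ℓ - lam) / G (ℓ - lam)| ≤ lam * (M ^ 2 / m ^ 2 + 1 / m) := by
  have hmM : m ≤ M := le_trans hmℓ hℓM
  have hM0 : 0 < M := lt_of_lt_of_le hm hmM
  set f : ℝ → ℝ := fun v => (v - m) * q v with hf
  have hfmeas : Measurable f := (measurable_id.sub measurable_const).mul hqm
  have hfbd : ∀ x ∈ Set.Icc m M, ‖f x‖ ≤ M := by
    intro x hx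
    have hq := hq01 x hx
    rw [Real.norm_eq_abs, abs_mul, abs_of_nonneg (by linarith [hx.1] : (0:ℝ) ≤ x - m),
      abs_of_nonneg hq.1]
    calc (x - m) * q x ≤ (x - m) * 1 := by
          apply mul_le_mul_of_nonneg_left hq.2; linarith [hx.1]
      _ ≤ M := by linarith [hx.2]
  have hqbd : ∀ x ∈ Set.Icc m M, ‖q x‖ ≤ 1 := by
    intro x hx
    have hq := hq01 x hx
    rw [Real.norm_eq_abs, abs_of_nonneg hq.1]; exact hq.2
  have hvqbd : ∀ x ∈ Set.Icc m M, ‖x * q x‖ ≤ M := by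
    intro x hx
    have hq := hq01 x hx
    rw [Real.norm_eq_abs, abs_mul, abs_of_nonneg (le_trans hm.le hx.1),
      abs_of_nonneg hq.1]
    calc x * q x ≤ x * 1 := mul_le_mul_of_nonneg_left hq.2 (le_trans hm.le hx.1)
      _ ≤ M := by linarith [hx.2]
  have hmem : ∀ c : ℝ, m ≤ c → c ≤ M → c ∈ Set.Icc m M := fun c h1 h2 => ⟨h1, h2⟩
  have hmm : m ∈ Set.Icc m M := ⟨le_refl m, hmM⟩
  have hℓmem : ℓ ∈ Set.Icc m M := ⟨hmℓ, hℓM⟩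
  have hℓ'mem : (ℓ - lam) ∈ Set.Icc m M := ⟨hlo, by linarith⟩
  -- rewrite G
  have hGrw : ∀ c ∈ Set.Icc m M, G c = m + ∫ v in m..c, f v := by
    intro c hc
    have h1 : IntervalIntegrable (fun v => v * q v) volume m c :=
      stmt18_aux_integrable m M m c hmm hc _ (measurable_id.mul hqm) M hvqbd
    have h2 : IntervalIntegrable q volume m c :=
      stmt18_aux_integrable m M m c hmm hc _ hqm 1 hqbd
    have h3 : (∫ v in m..c, f v)
        = (∫ v in m..c, v * q v) - m * ∫ v in m..c, q v := by
      have : (∫ v in m..c, f v) = ∫ v in m..c, (v * q v - m * q v) := by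
        apply intervalIntegral.integral_congr
        intro x _
        simp [hf]; ring
      rw [this, intervalIntegral.integral_sub h1 (h2.const_mul m),
        intervalIntegral.integral_const_mul]
    rw [hG c, h3]; ring
  have hfint : ∀ a b, a ∈ Set.Icc m M → b ∈ Set.Icc m M →
      IntervalIntegrable f volume a b := fun a b ha hb =>
    stmt18_aux_integrable m M a b ha hb _ hfmeas M hfbd
  set Δ : ℝ := ∫ v in (ℓ - lam)..ℓ, f v with hΔ
  have hsplit : (∫ v in m..ℓ, f v) = (∫ v in m..(ℓ - lam), f v) + Δ := by
    rw [hΔ, intervalIntegral.integral_add_adjacent_intervals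
      (hfint m (ℓ - lam) hmm hℓ'mem) (hfint (ℓ - lam) ℓ hℓ'mem hℓmem)]
  have hfnonneg : ∀ x ∈ Set.Icc m M, 0 ≤ f x := by
    intro x hx
    exact mul_nonneg (by linarith [hx.1]) (hq01 x hx).1
  have hJ' : 0 ≤ ∫ v in m..(ℓ - lam), f v := by
    apply intervalIntegral.integral_nonneg hlo
    intro u hu; exact hfnonneg u ⟨hu.1, by linarith [hu.2]⟩
  have hΔ0 : 0 ≤ Δ := by
    apply intervalIntegral.integral_nonneg (by linarith)
    intro u hu; exact hfnonneg u ⟨by linarith [hu.1], by linarith [hu.2]⟩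
  have hΔle : Δ ≤ lam * M := by
    have hconst : IntervalIntegrable (fun _ : ℝ => M) volume (ℓ - lam) ℓ :=
      intervalIntegrable_const
    have hmono : Δ ≤ ∫ _ in (ℓ - lam)..ℓ, M := by
      apply intervalIntegral.integral_mono_on (by linarith)
        (hfint (ℓ - lam) ℓ hℓ'mem hℓmem) hconst
      intro x hx
      have hx' : x ∈ Set.Icc m M := ⟨by linarith [hx.1], by linarith [hx.2]⟩
      have := hfbd x hx'
      rw [Real.norm_eq_abs] at this
      exact le_trans (le_abs_self _) this
    rw [intervalIntegral.integral_const, smul_eq_mul] at hmono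
    linarith
  -- values of G
  have hA : G ℓ = m + ((∫ v in m..(ℓ - lam), f v) + Δ) := by
    rw [hGrw ℓ hℓmem, hsplit]
  have hB : G (ℓ - lam) = m + ∫ v in m..(ℓ - lam), f v := hGrw _ hℓ'mem
  set J : ℝ := ∫ v in m..(ℓ - lam), f v
  have hB0 : 0 < G (ℓ - lam) := by rw [hB]; linarith
  have hA0 : 0 < G ℓ := by rw [hA]; linarith
  have hBm : m ≤ G (ℓ - lam) := by rw [hB]; linarith
  have hAm : m ≤ G ℓ := by rw [hA]; linarith
  have hAB : G ℓ - G (ℓ - lam) = Δ := by rw [hA, hB]; ring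
  rw [div_sub_div _ _ (ne_of_gt hA0) (ne_of_gt hB0), abs_div,
    abs_of_pos (mul_pos hA0 hB0), div_le_iff₀ (mul_pos hA0 hB0)]
  have hnum : ℓ * G (ℓ - lam) - G ℓ * (ℓ - lam) = lam * G ℓ - ℓ * Δ := by
    have : G (ℓ - lam) = G ℓ - Δ := by linarith
    rw [this]; ring
  rw [hnum]
  have habs : |lam * G ℓ - ℓ * Δ| ≤ lam * G ℓ + ℓ * Δ := by
    rw [abs_sub_le_iff]
    constructor
    · nlinarith [mul_nonneg (le_trans hm.le hmℓ) hΔ0]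
    · nlinarith [mul_pos hlam hA0]
  refine le_trans habs ?_
  have hkey : M ^ 2 / m ^ 2 * m ^ 2 = M ^ 2 := by
    field_simp
  have hΔM : ℓ * Δ ≤ lam * M ^ 2 := by
    nlinarith [mul_le_mul_of_nonneg_left hΔle (le_trans hm.le hmℓ)]
  have h1 : lam * M ^ 2 ≤ lam * (M ^ 2 / m ^ 2) * (G ℓ * G (ℓ - lam)) := by
    have hABm : m ^ 2 ≤ G ℓ * G (ℓ - lam) := by nlinarith
    have e1 : lam * (M ^ 2 / m ^ 2) * m ^ 2 = lam * M ^ 2 := by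
      rw [mul_assoc, hkey]
    have := mul_le_mul_of_nonneg_left hABm
      (show (0:ℝ) ≤ lam * (M ^ 2 / m ^ 2) by positivity)
    linarith
  have h2 : lam * G ℓ ≤ lam * (1 / m) * (G ℓ * G (ℓ - lam)) := by
    have e2 : lam * (1 / m) * (G ℓ * G (ℓ - lam))
        = lam * G ℓ * (G (ℓ - lam) / m) := by ring
    have hb1 : 1 ≤ G (ℓ - lam) / m := (one_le_div hm).mpr hBm
    have h3 := mul_le_mul_of_nonneg_left hb1 (mul_pos hlam hA0).le
    rw [mul_one] at h3
    rw [e2]; linarith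
  linarith
end
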